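/- arXiv:0811.0129 — 2 statements merged into one kernel-verified Lean document; each statement's English description precedes it below -/
import Mathlib

section
/- Let A be an algebra over a field K with elements e, f, ω, ω' where ω, ω' are invertible, satisfying ω e ω^{-1} = q e, ω' e ω'^{-1} = q^{-1} e, ω f ω^{-1} = q^{-1} f, ω' f ω'^{-1} = q f, ωω' = ω'ω, and ef - fe = (q/(q-1))(ω - ω'), for a scalar q ≠ 0, 1. Then for all m ≥ 1: e f^m = f^m e + (q/(q-1)) f^{m-1} ((m)_{q^{-1}} ω - (m)_q ω'), where (m)_t = 1 + t + ... + t^{m-1}. -/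
/-!
Write `[e, f^(m+1)] = [e, f^m] f + f^m [e, f]`. Moving the trailing `f` to the left past `ω`
(resp. `ω'`) only rescales by `q⁻¹` (resp. `q`), so by induction on `m` the coefficients of
`f^m ω` and `f^m ω'` obey `c ↦ q⁻¹ c + 1` and `c ↦ q c + 1`: the recursions of `(m)_{q⁻¹}` and
`(m)_q`.
-/

/-- The `t`-integer `(m)_t = 1 + t + ⋯ + t^{m-1}`. -/
def qint {K : Type*} [Field K] (t : K) (m : ℕ) : K :=
  ∑ i ∈ Finset.range m, t ^ i

lemma qint_succ {K : Type*} [Field K] (t : K) (m : ℕ) :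
    qint t (m + 1) = t * qint t m + 1 := by
  simp [qint, geom_sum_succ]

section TwistedCommutator

variable {K A : Type*} [Field K] [Ring A] [Algebra K A]

lemma smul_mul_eq_mul_smul_of_mul_eq_smul {f x : A} {a : K} (hx : x * f = a • (f * x))
    (c : K) : (c • x) * f = f * ((a * c) • x) := by
  rw [smul_mul_assoc, hx, smul_smul, mul_smul_comm, mul_comm]

lemma mul_pow_succ_of_commutator_eq_twisted_sub {e f x y : A} {a b : K}
    (hxf : x * f = a • (f * x)) (hyf : y * f = b • (f * y)) (hef : e * f - f * e = x - y)
    (m : ℕ) :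
    e * f ^ (m + 1) = f ^ (m + 1) * e + f ^ m * (qint a (m + 1) • x - qint b (m + 1) • y) := by
  induction m with
  | zero => simp [qint, ← hef]
  | succ m ih =>
    have hmove : (qint a (m + 1) • x - qint b (m + 1) • y) * f
        = f * ((a * qint a (m + 1)) • x - (b * qint b (m + 1)) • y) := by
      rw [sub_mul, smul_mul_eq_mul_smul_of_mul_eq_smul hxf,
        smul_mul_eq_mul_smul_of_mul_eq_smul hyf, mul_sub]
    calc e * f ^ (m + 2)
        = (e * f ^ (m + 1)) * f := by rw [pow_succ, mul_assoc]
      _ = f ^ (m + 1) * (e * f)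
            + f ^ m * ((qint a (m + 1) • x - qint b (m + 1) • y) * f) := by
          rw [ih, add_mul, mul_assoc, mul_assoc]
      _ = f ^ (m + 2) * e + f ^ (m + 1) * (qint a (m + 2) • x - qint b (m + 2) • y) := by
          rw [hmove, eq_add_of_sub_eq' hef, ← mul_assoc (f ^ m), ← pow_succ, qint_succ a (m + 1),
            qint_succ b (m + 1)]
          simp only [pow_succ, mul_add, mul_sub, add_smul, one_smul, mul_assoc]
          abel

end TwistedCommutator

theorem ef_pow_commutation_general {K A : Type*} [Field K] [Ring A] [Algebra K A]
    (q : K)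
    (e f ω ω' : A)
    (hωf : ω * f = q⁻¹ • (f * ω)) (hω'f : ω' * f = q • (f * ω'))
    (heff : e * f - f * e = (q / (q - 1)) • (ω - ω'))
    (m : ℕ) :
    e * f ^ m
      = f ^ m * e +
          (q / (q - 1)) • (f ^ (m - 1) * (qint q⁻¹ m • ω - qint q m • ω')) := by
  set c := q / (q - 1)
  have twist {x : A} {a : K} (hx : x * f = a • (f * x)) : (c • x) * f = a • (f * (c • x)) := by
    rw [smul_mul_assoc, hx, mul_smul_comm, smul_comm]
  cases m with
  | zero => simp [qint] -- `m - 1` truncates to `0`, but both `t`-integers vanish at `m = 0`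
  | succ m =>
    rw [smul_sub] at heff
    rw [mul_pow_succ_of_commutator_eq_twisted_sub (twist hωf) (twist hω'f) heff m,
      Nat.add_sub_cancel, smul_comm _ c ω, smul_comm _ c ω', ← smul_sub, mul_smul_comm]

/-- in a `K`-algebra with elements `e, f` and invertible commuting
`ω, ω'` satisfying the rank-one multi-parameter quantum group relations,
`e f^m = f^m e + (q/(q-1)) f^{m-1} ((m)_{q⁻¹} ω - (m)_q ω')` for all `m ≥ 1`. -/
theorem ef_pow_commutation {K A : Type*} [Field K] [Ring A] [Algebra K A]
    (q : K) (hq0 : q ≠ 0) (hq1 : q ≠ 1)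
    (e f ω ω' : A) (hω : IsUnit ω) (hω' : IsUnit ω')
    (hcomm : ω * ω' = ω' * ω)
    (hωe : ω * e = q • (e * ω)) (hω'e : ω' * e = q⁻¹ • (e * ω'))
    (hωf : ω * f = q⁻¹ • (f * ω)) (hω'f : ω' * f = q • (f * ω'))
    (heff : e * f - f * e = (q / (q - 1)) • (ω - ω'))
    (m : ℕ) (hm : 1 ≤ m) :
    e * f ^ m
      = f ^ m * e +
          (q / (q - 1)) • (f ^ (m - 1) * (qint q⁻¹ m • ω - qint q m • ω')) :=
  ef_pow_commutation_general q e f ω ω' hωf hω'f heff m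
end

section
/- Let (a_{ij}) be a symmetrizable GCM and q_{ij} ∈ K^× with q_{ij}q_{ji} = q_{ii}^{a_{ij}}, q_{ii} not a root of unity. Then in the quantum shuffle algebra (F, ⋆), the quantum Serre relation holds: for i ≠ j, ∑_{k=0}^{1-a_{ij}} (-1)^k binom(1-a_{ij}, k)_{q_{ii}} q_{ii}^{k(k-1)/2} q_{ij}^k · w_i^{⋆(1-a_{ij}-k)} ⋆ w_j ⋆ w_i^{⋆k} = 0. -/
/-- The free associative algebra `F` on generators `w_i` (`i ∈ I`), realized as
the monoid algebra of the free monoid on `I` (words = lists). -/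
abbrev FA (K I : Type*) [Field K] : Type _ := MonoidAlgebra K (FreeMonoid I)

variable {K I : Type*} [Field K] [Fintype I] [DecidableEq I]

/-- The generator `w_i` of the free algebra. -/
noncomputable def wgen (K : Type*) [Field K] {I : Type*} (i : I) : FA K I :=
  MonoidAlgebra.single (FreeMonoid.of i) 1

/-- `q_{α_i, ν}` where `ν` is the degree of the word `w` (here `w` is a list of
letters, and the degree records the number of occurrences of each letter). -/
noncomputable def qrow (qm : I → I → K) (i : I) (w : List I) : K :=
  ∏ k : I, qm i k ^ (w.count k)

/-- Auxiliary recursion for the quantum shuffle product of two basis words;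
the arguments are the *reversed* words. It implements
`(x w_i) ⋆ (y w_j) = (x w_i ⋆ y) w_j + q_{α_i, ν+α_j} (x ⋆ y w_j) w_i`. -/
noncomputable def shAux (qm : I → I → K) : List I → List I → FA K I
  | [], b => MonoidAlgebra.single (FreeMonoid.ofList b.reverse) 1
  | a, [] => MonoidAlgebra.single (FreeMonoid.ofList a.reverse) 1
  | i :: a', j :: b' =>
      shAux qm (i :: a') b' * MonoidAlgebra.single (FreeMonoid.of j) 1
        + (qrow qm i b' * qm i j) •
            (shAux qm a' (j :: b') * MonoidAlgebra.single (FreeMonoid.of i) 1)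
  termination_by a b => a.length + b.length

/-- The quantum shuffle product `⋆` on the free algebra, extended bilinearly
from basis words. -/
noncomputable def shuffle (qm : I → I → K) (x y : FA K I) : FA K I :=
  Finsupp.sum x.coeff fun a ca =>
    Finsupp.sum y.coeff fun b cb =>
      (ca * cb) • shAux qm (FreeMonoid.toList a).reverse (FreeMonoid.toList b).reverse

/-- The `m`-fold quantum shuffle power `w_i^{⋆m}`. -/
noncomputable def starPow (qm : I → I → K) (i : I) : ℕ → FA K I
  | 0 => 1
  | n + 1 => shuffle qm (starPow qm i n) (wgen K i)

/-- The Gaussian binomial coefficient `binom(n,k)_t`, via the Pascal recursion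
`binom(n,k)_t = t^k binom(n-1,k)_t + binom(n-1,k-1)_t`. -/
noncomputable def qbinom (t : K) : ℕ → ℕ → K
  | _, 0 => 1
  | 0, _ + 1 => 0
  | n + 1, k + 1 => t ^ (k + 1) * qbinom t n (k + 1) + qbinom t n k

/-!
Every star power is a multiple of a word, `w_i^{⋆n} = [n]! w_i^n`, so each summand of the Serre
element expands into words `w_i^e w_j w_i^b` with `e + b = m := 1 - a_{ij}`. A term of the
expansion is indexed by the number `t` of letters `w_i` that `w_j` passes in `w_i^{⋆(m-k)} ⋆ w_j`
and by the split `k = u + v` of the letters of `w_i^{⋆k}` landing right and left of `w_j`.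
Grouping the terms by `b = t + u`, the coefficient of `w_i^e w_j w_i^b` becomes `[m]! q_{ij}^b`
times a product of two Gauss sums `∑_l (-1)^l t^{l(l-1)/2} x^l binom(N, l)_t = ∏_{n<N} (1 - t^n x)`:
one with `x = 1, N = b`, which vanishes for `b ≥ 1`, and one with `x = q_{ii}^b q_{ij} q_{ji}`,
`N = e`, which for `b = 0` has the factor `1 - q_{ii}^{-a_{ij}} q_{ij} q_{ji} = 0`.
-/

open Finset

namespace QuantumShuffle

noncomputable def qint (t : K) (n : ℕ) : K := ∑ k ∈ range n, t ^ k

noncomputable def qfact (t : K) (n : ℕ) : K := ∏ k ∈ range n, qint t (k + 1)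

lemma qint_add (t : K) (a b : ℕ) : qint t (a + b) = qint t a + t ^ a * qint t b := by
  simp only [qint, sum_range_add, mul_sum, pow_add]

@[simp] lemma qint_one (t : K) : qint t 1 = 1 := by simp [qint]

@[simp] lemma qfact_zero (t : K) : qfact t 0 = 1 := rfl

lemma qfact_succ (t : K) (n : ℕ) : qfact t (n + 1) = qfact t n * qint t (n + 1) :=
  prod_range_succ _ _

@[simp] lemma qbinom_zero_right (t : K) (n : ℕ) : qbinom t n 0 = 1 := by cases n <;> rfl

lemma qbinom_succ_succ (t : K) (n k : ℕ) :
    qbinom t (n + 1) (k + 1) = t ^ (k + 1) * qbinom t n (k + 1) + qbinom t n k := rfl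

lemma qbinom_eq_zero_of_lt (t : K) {n k : ℕ} (h : n < k) : qbinom t n k = 0 := by
  induction n generalizing k with
  | zero => obtain ⟨k, rfl⟩ := Nat.exists_eq_add_one_of_ne_zero h.ne'; rfl
  | succ n ih =>
    obtain ⟨k, rfl⟩ := Nat.exists_eq_add_one_of_ne_zero (Nat.ne_zero_of_lt h)
    rw [qbinom_succ_succ, ih (by omega), ih (by omega), mul_zero, add_zero]

@[simp] lemma qbinom_self (t : K) (n : ℕ) : qbinom t n n = 1 := by
  induction n with
  | zero => rfl
  | succ n ih =>
    rw [qbinom_succ_succ, ih, qbinom_eq_zero_of_lt t (lt_add_one n), mul_zero, zero_add]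

lemma qbinom_one (t : K) (n : ℕ) : qbinom t n 1 = qint t n := by
  induction n with
  | zero => rfl
  | succ n ih =>
    rw [qbinom_succ_succ, ih, qbinom_zero_right, add_comm n, qint_add, qint_one, pow_one,
      add_comm]

lemma qfact_mul_qfact_mul_qbinom (t : K) (a b : ℕ) :
    qfact t a * qfact t b * qbinom t (a + b) b = qfact t (a + b) := by
  induction a generalizing b with
  | zero => simp
  | succ a iha =>
    induction b with
    | zero => simp
    | succ b ihb =>
      have hleft := iha (b + 1)
      rw [← add_assoc, add_right_comm, qfact_succ t b] at hleft
      rw [qfact_succ t a] at ihb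
      have hint : qint t (a + 1 + b + 1) = qint t (b + 1) + t ^ (b + 1) * qint t (a + 1) := by
        rw [← qint_add]
        congr 1
        ring
      rw [← add_assoc, qbinom_succ_succ, qfact_succ t a, qfact_succ t b, qfact_succ t (a + 1 + b),
        hint]
      linear_combination t ^ (b + 1) * qint t (a + 1) * hleft + qint t (b + 1) * ihb

noncomputable def gaussTerm (t x : K) (N l : ℕ) : K :=
  (-1) ^ l * t ^ l.choose 2 * x ^ l * qbinom t N l

@[simp] lemma gaussTerm_zero_right (t x : K) (N : ℕ) : gaussTerm t x N 0 = 1 := by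
  simp [gaussTerm]

theorem sum_range_gaussTerm (t x : K) (N : ℕ) :
    ∑ l ∈ range (N + 1), gaussTerm t x N l = ∏ n ∈ range N, (1 - t ^ n * x) := by
  induction N generalizing x with
  | zero => simp
  | succ N ih =>
    have hpascal (l : ℕ) : gaussTerm t x (N + 1) (l + 1) =
        gaussTerm t (t * x) N (l + 1) - x * gaussTerm t (t * x) N l := by
      simp only [gaussTerm, qbinom_succ_succ, Nat.choose_succ_succ', Nat.choose_one_right]
      ring
    calc ∑ l ∈ range (N + 2), gaussTerm t x (N + 1) l
        = ∑ l ∈ range (N + 2), gaussTerm t (t * x) N l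
            - x * ∑ l ∈ range (N + 1), gaussTerm t (t * x) N l := by
          rw [sum_range_succ', sum_range_succ' _ (N + 1), mul_sum]
          simp only [hpascal, sum_sub_distrib, gaussTerm_zero_right]
          ring
      _ = (1 - x) * ∑ l ∈ range (N + 1), gaussTerm t (t * x) N l := by
          rw [sum_range_succ _ (N + 1), gaussTerm, qbinom_eq_zero_of_lt t (lt_add_one N)]
          ring
      _ = ∏ n ∈ range (N + 1), (1 - t ^ n * x) := by
          rw [ih, prod_range_succ']
          simp only [pow_succ, mul_assoc, pow_zero, one_mul]
          ring

lemma choose_two_add (u v : ℕ) : (u + v).choose 2 = u.choose 2 + v.choose 2 + u * v := by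
  rw [Nat.add_choose_eq]
  simp [Finset.Nat.antidiagonal_succ]
  ring

lemma sum_antidiagonal_eq_sum_range {M : Type*} [AddCommMonoid M] (f : ℕ × ℕ → M) (N : ℕ) :
    ∑ p ∈ antidiagonal N, f p = ∑ k ∈ range (N + 1), f (N - k, k) := by
  rw [← Finset.Nat.sum_antidiagonal_swap, Finset.Nat.sum_antidiagonal_eq_sum_range_succ_mk]
  rfl

lemma sum_antidiagonal_antidiagonal_antidiagonal_rotate {M : Type*} [AddCommMonoid M] (m : ℕ)
    (f : ℕ → ℕ → ℕ → ℕ → M) :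
    ∑ p ∈ antidiagonal m, ∑ a ∈ antidiagonal p.1, ∑ c ∈ antidiagonal p.2, f a.1 a.2 c.1 c.2 =
      ∑ p ∈ antidiagonal m, ∑ a ∈ antidiagonal p.1, ∑ c ∈ antidiagonal p.2, f a.1 c.1 c.2 a.2 := by
  simp only [sum_sigma']
  refine sum_nbij'
    (fun x => ⟨(x.2.1.1 + x.2.2.2, x.2.1.2 + x.2.2.1), (x.2.1.1, x.2.2.2), (x.2.1.2, x.2.2.1)⟩)
    (fun x => ⟨(x.2.1.1 + x.2.2.1, x.2.2.2 + x.2.1.2), (x.2.1.1, x.2.2.1), (x.2.2.2, x.2.1.2)⟩)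
    ?_ ?_ ?_ ?_ fun _ _ => rfl
  all_goals
    rintro ⟨⟨n, k⟩, ⟨x, t⟩, ⟨u, v⟩⟩ h
    simp only [mem_sigma, HasAntidiagonal.mem_antidiagonal, and_true] at h ⊢
    obtain ⟨rfl, rfl, rfl⟩ := h
  · omega
  · omega
  · rfl
  · rfl

variable (K) in
noncomputable def word (l : List I) : FA K I := MonoidAlgebra.single (FreeMonoid.ofList l) 1

omit [Fintype I] [DecidableEq I] in
lemma word_mul_word (u v : List I) : word K u * word K v = word K (u ++ v) := by
  rw [word, word, MonoidAlgebra.single_mul_single, one_mul, word, FreeMonoid.ofList_append]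

omit [Fintype I] [DecidableEq I] in
lemma wgen_eq_word (i : I) : wgen K i = word K [i] := rfl

noncomputable def shuffleBilin (qm : I → I → K) : FA K I →ₗ[K] FA K I →ₗ[K] FA K I :=
  Finsupp.lsum K (fun a => LinearMap.toSpanSingleton K _
      (Finsupp.lsum K (fun b => LinearMap.toSpanSingleton K _
        (shAux qm (FreeMonoid.toList a).reverse (FreeMonoid.toList b).reverse))
        ∘ₗ (MonoidAlgebra.coeffLinearEquiv K).toLinearMap))
    ∘ₗ (MonoidAlgebra.coeffLinearEquiv K).toLinearMap

lemma shuffle_eq_shuffleBilin (qm : I → I → K) (x y : FA K I) :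
    shuffle qm x y = shuffleBilin qm x y := by
  simp [shuffle, shuffleBilin, Finsupp.smul_sum, mul_smul]

lemma shuffle_smul_left (qm : I → I → K) (c : K) (x y : FA K I) :
    shuffle qm (c • x) y = c • shuffle qm x y := by
  simp only [shuffle_eq_shuffleBilin, map_smul, LinearMap.smul_apply]

lemma shuffle_smul_right (qm : I → I → K) (c : K) (x y : FA K I) :
    shuffle qm x (c • y) = c • shuffle qm x y := by
  simp only [shuffle_eq_shuffleBilin, map_smul]

lemma shuffle_sum_left (qm : I → I → K) {ι : Type*} (s : Finset ι) (f : ι → FA K I)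
    (y : FA K I) : shuffle qm (∑ k ∈ s, f k) y = ∑ k ∈ s, shuffle qm (f k) y := by
  simp only [shuffle_eq_shuffleBilin, map_sum, LinearMap.sum_apply]

lemma shuffle_word_word (qm : I → I → K) (u v : List I) :
    shuffle qm (word K u) (word K v) = shAux qm u.reverse v.reverse := by
  simp [shuffle, word, MonoidAlgebra.coeff_single]

lemma shuffle_word_nil (qm : I → I → K) (u : List I) :
    shuffle qm (word K u) (word K []) = word K u := by
  obtain ⟨w, rfl⟩ : ∃ w, u = w.reverse := ⟨u.reverse, by simp⟩
  rw [shuffle_word_word, List.reverse_reverse, List.reverse_nil]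
  cases w <;> simp [shAux, word]

lemma shuffle_nil_word (qm : I → I → K) (v : List I) :
    shuffle qm (word K []) (word K v) = word K v := by
  rw [shuffle_word_word, List.reverse_nil, shAux, List.reverse_reverse]
  rfl

lemma qrow_reverse (qm : I → I → K) (x : I) (v : List I) :
    qrow qm x v.reverse = qrow qm x v := by
  simp [qrow]

lemma qrow_replicate (qm : I → I → K) (x y : I) (n : ℕ) :
    qrow qm x (List.replicate n y) = qm x y ^ n := by
  simp [qrow, List.count_replicate]

lemma shuffle_word_append_append (qm : I → I → K) (u v : List I) (x y : I) :
    shuffle qm (word K (u ++ [x])) (word K (v ++ [y])) =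
      shuffle qm (word K (u ++ [x])) (word K v) * word K [y] +
        (qrow qm x v * qm x y) • (shuffle qm (word K u) (word K (v ++ [y])) * word K [x]) := by
  simp only [shuffle_word_word, List.reverse_append, List.reverse_singleton, List.singleton_append]
  rw [shAux, qrow_reverse]
  rfl

lemma shuffle_replicate_replicate (qm : I → I → K) (i : I) (p k : ℕ) :
    shuffle qm (word K (List.replicate p i)) (word K (List.replicate k i)) =
      qbinom (qm i i) (p + k) k • word K (List.replicate (p + k) i) := by
  induction p generalizing k with
  | zero => simp [shuffle_nil_word]
  | succ p ihp =>
    induction k with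
    | zero => simp [shuffle_word_nil]
    | succ k ihk =>
      rw [List.replicate_succ' (n := p), List.replicate_succ' (n := k), shuffle_word_append_append,
        ← List.replicate_succ', ← List.replicate_succ', ihk, ihp, qrow_replicate, smul_mul_assoc,
        smul_mul_assoc, word_mul_word, word_mul_word, ← List.replicate_succ',
        ← List.replicate_succ', smul_smul, show p + (k + 1) + 1 = p + 1 + k + 1 by ring,
        ← add_smul, show p + (k + 1) = p + 1 + k by ring, add_assoc (p + 1), ← add_assoc,
        qbinom_succ_succ]
      congr 1
      ring

lemma starPow_eq_qfact_smul (qm : I → I → K) (i : I) (n : ℕ) :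
    starPow qm i n = qfact (qm i i) n • word K (List.replicate n i) := by
  induction n with
  | zero => rw [qfact_zero, one_smul]; rfl
  | succ n ih =>
    rw [starPow, ih, shuffle_smul_left, wgen_eq_word, ← List.replicate_one,
      shuffle_replicate_replicate, qbinom_one, smul_smul, qfact_succ]

variable (K) in
noncomputable def jWord (i j : I) (p t : ℕ) : FA K I :=
  word K (List.replicate p i ++ j :: List.replicate t i)

omit [Fintype I] [DecidableEq I] in
lemma jWord_zero_right (i j : I) (p : ℕ) :
    jWord K i j p 0 = word K (List.replicate p i ++ [j]) := rfl

omit [Fintype I] [DecidableEq I] in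
lemma jWord_succ_right (i j : I) (p t : ℕ) :
    jWord K i j p (t + 1) = word K ((List.replicate p i ++ j :: List.replicate t i) ++ [i]) := by
  simp [jWord, List.replicate_succ']

omit [Fintype I] [DecidableEq I] in
lemma jWord_mul_word (i j : I) (p t : ℕ) :
    jWord K i j p t * word K [i] = jWord K i j p (t + 1) := by
  rw [jWord, word_mul_word, jWord_succ_right]

lemma shuffle_replicate_singleton (qm : I → I → K) (i j : I) (a : ℕ) :
    shuffle qm (word K (List.replicate a i)) (word K [j]) =
      ∑ p ∈ antidiagonal a, qm i j ^ p.2 • jWord K i j p.1 p.2 := by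
  induction a with
  | zero => simp [shuffle_nil_word, jWord]
  | succ a ih =>
    rw [List.replicate_succ', ← List.nil_append [j], shuffle_word_append_append,
      List.nil_append, ← List.replicate_succ', shuffle_word_nil, ih, word_mul_word,
      Finset.Nat.sum_antidiagonal_succ', sum_mul, smul_sum]
    simp [jWord_mul_word, smul_smul, qrow, jWord_zero_right, pow_succ']

lemma shuffle_jWord_replicate (qm : I → I → K) (i j : I) (p t k : ℕ) :
    shuffle qm (jWord K i j p t) (word K (List.replicate k i)) =
      ∑ c ∈ antidiagonal k, (qm j i ^ c.2 * qm i i ^ (t * c.2) * qbinom (qm i i) (t + c.1) c.1 *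
        qbinom (qm i i) (p + c.2) c.2) • jWord K i j (p + c.2) (t + c.1) := by
  induction k generalizing t with
  | zero => simp [jWord, shuffle_word_nil]
  | succ k ihk =>
    induction t with
    | zero =>
      rw [jWord_zero_right, List.replicate_succ', shuffle_word_append_append, ← jWord_zero_right,
        ← List.replicate_succ', ihk, shuffle_replicate_replicate, qrow_replicate, sum_mul,
        Finset.Nat.sum_antidiagonal_succ, add_comm]
      simp [jWord_mul_word, word_mul_word, ← jWord_zero_right, pow_succ, smul_smul]
    | succ t iht =>
      rw [jWord_succ_right, List.replicate_succ', shuffle_word_append_append, ← jWord_succ_right,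
        ← List.replicate_succ', ← jWord, ihk, iht, qrow_replicate, sum_mul, sum_mul,
        Finset.Nat.sum_antidiagonal_succ, Finset.Nat.sum_antidiagonal_succ]
      simp only [smul_mul_assoc, jWord_mul_word, smul_add, smul_sum, smul_smul]
      rw [add_left_comm, ← sum_add_distrib]
      congr 1
      · simp only [add_zero, qbinom_zero_right]
        congr 1
        ring
      refine sum_congr rfl fun c hc => ?_
      obtain rfl : c.1 + c.2 = k := mem_antidiagonal.mp hc
      rw [show t + (c.1 + 1) = t + 1 + c.1 by ring, ← add_smul, ← add_assoc (t + 1),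
        qbinom_succ_succ]
      congr 1
      ring

lemma shuffle_starPow_wgen_shuffle_starPow (qm : I → I → K) (i j : I) (n k : ℕ) :
    shuffle qm (shuffle qm (starPow qm i n) (wgen K j)) (starPow qm i k) =
      ∑ a ∈ antidiagonal n, ∑ c ∈ antidiagonal k,
        (qfact (qm i i) n * qfact (qm i i) k * qm i j ^ a.2 *
          (qm j i ^ c.2 * qm i i ^ (a.2 * c.2) * qbinom (qm i i) (a.2 + c.1) c.1 *
            qbinom (qm i i) (a.1 + c.2) c.2)) • jWord K i j (a.1 + c.2) (a.2 + c.1) := by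
  rw [starPow_eq_qfact_smul, starPow_eq_qfact_smul, wgen_eq_word, shuffle_smul_left,
    shuffle_replicate_singleton, shuffle_smul_right, shuffle_smul_left, shuffle_sum_left]
  simp only [shuffle_smul_left, shuffle_jWord_replicate, smul_sum, smul_smul]
  refine sum_congr rfl fun a _ => sum_congr rfl fun c _ => ?_
  congr 1
  ring

noncomputable def serreCoeff (qm : I → I → K) (i j : I) (e b u v : ℕ) : K :=
  qfact (qm i i) (e + b) * qm i j ^ b * gaussTerm (qm i i) 1 b u *
    gaussTerm (qm i i) (qm i i ^ b * (qm i j * qm j i)) e v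

lemma serre_summand_eq_sum_serreCoeff (qm : I → I → K) (i j : I) (n k : ℕ) :
    ((-1) ^ k * qbinom (qm i i) (n + k) k * qm i i ^ (k * (k - 1) / 2) * qm i j ^ k) •
        shuffle qm (shuffle qm (starPow qm i n) (wgen K j)) (starPow qm i k) =
      ∑ a ∈ antidiagonal n, ∑ c ∈ antidiagonal k,
        serreCoeff qm i j (a.1 + c.2) (a.2 + c.1) c.1 c.2 • jWord K i j (a.1 + c.2) (a.2 + c.1) := by
  rw [shuffle_starPow_wgen_shuffle_starPow, smul_sum]
  refine sum_congr rfl fun a ha => ?_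
  rw [smul_sum]
  refine sum_congr rfl fun c hc => ?_
  obtain rfl := HasAntidiagonal.mem_antidiagonal.mp ha
  obtain rfl := HasAntidiagonal.mem_antidiagonal.mp hc
  rw [smul_smul, serreCoeff, gaussTerm, gaussTerm,
    show a.1 + c.2 + (a.2 + c.1) = a.1 + a.2 + (c.1 + c.2) by ring,
    ← qfact_mul_qfact_mul_qbinom _ (a.1 + a.2) (c.1 + c.2), ← Nat.choose_two_right,
    choose_two_add]
  congr 1
  ring

omit [Fintype I] [DecidableEq I] in
lemma sum_sum_serreCoeff_eq_zero (qm : I → I → K) (i j : I) {n : ℕ}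
    (hq : qm i i ^ n * (qm i j * qm j i) = 1) {e b : ℕ} (h : e + b = n + 1) :
    ∑ a ∈ antidiagonal e, ∑ c ∈ antidiagonal b, serreCoeff qm i j e b c.2 a.2 = 0 := by
  simp only [serreCoeff, ← mul_sum, ← sum_mul]
  rw [sum_antidiagonal_eq_sum_range _ b, sum_antidiagonal_eq_sum_range _ e]
  simp only [sum_range_gaussTerm]
  rcases b with _ | b
  · have hlast : 1 - qm i i ^ n * (qm i i ^ 0 * (qm i j * qm j i)) = 0 := by
      rw [pow_zero, one_mul, hq, sub_self]
    rw [prod_eq_zero (mem_range.2 (show n < e by omega)) hlast, mul_zero]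
  · rw [prod_eq_zero (mem_range.2 (Nat.succ_pos b)) (by simp), mul_zero, zero_mul]

theorem serre_sum_eq_zero (qm : I → I → K) (i j : I) (n : ℕ)
    (hq : qm i i ^ n * (qm i j * qm j i) = 1) :
    ∑ k ∈ range (n + 1 + 1),
        ((-1) ^ k * qbinom (qm i i) (n + 1) k * qm i i ^ (k * (k - 1) / 2) * qm i j ^ k) •
          shuffle qm (shuffle qm (starPow qm i (n + 1 - k)) (wgen K j)) (starPow qm i k) = 0 :=
  calc _ = ∑ p ∈ antidiagonal (n + 1), ∑ a ∈ antidiagonal p.1, ∑ c ∈ antidiagonal p.2,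
        serreCoeff qm i j (a.1 + c.2) (a.2 + c.1) c.1 c.2 • jWord K i j (a.1 + c.2) (a.2 + c.1) := by
        rw [sum_antidiagonal_eq_sum_range _ (n + 1)]
        refine sum_congr rfl fun k hk => ?_
        dsimp only
        rw [← serre_summand_eq_sum_serreCoeff, Nat.sub_add_cancel (mem_range_succ_iff.mp hk)]
    _ = ∑ p ∈ antidiagonal (n + 1), ∑ a ∈ antidiagonal p.1, ∑ c ∈ antidiagonal p.2,
        serreCoeff qm i j (a.1 + a.2) (c.1 + c.2) c.2 a.2 • jWord K i j (a.1 + a.2) (c.1 + c.2) :=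
      sum_antidiagonal_antidiagonal_antidiagonal_rotate _
        fun x t u v => serreCoeff qm i j (x + v) (t + u) u v • jWord K i j (x + v) (t + u)
    _ = 0 := sum_eq_zero fun ⟨e, b⟩ hp => calc
      _ = (∑ a ∈ antidiagonal e, ∑ c ∈ antidiagonal b, serreCoeff qm i j e b c.2 a.2) •
            jWord K i j e b := by
          simp only [sum_smul]
          refine sum_congr rfl fun a ha => sum_congr rfl fun c hc => ?_
          rw [HasAntidiagonal.mem_antidiagonal.mp ha, HasAntidiagonal.mem_antidiagonal.mp hc]
      _ = 0 := by
          rw [sum_sum_serreCoeff_eq_zero qm i j hq (HasAntidiagonal.mem_antidiagonal.mp hp),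
            zero_smul]

end QuantumShuffle

theorem shuffle_serre_relation_general (a : I → I → ℤ)
    (hoff : ∀ i j, i ≠ j → a i j ≤ 0)
    (qm : I → I → K) (hq0 : ∀ i j, qm i j ≠ 0)
    (hrel : ∀ i j, qm i j * qm j i = qm i i ^ (a i j))
    (i j : I) (hij : i ≠ j) :
    ∑ k ∈ Finset.range ((1 - a i j).toNat + 1),
        ((-1 : K) ^ k * qbinom (qm i i) (1 - a i j).toNat k *
            qm i i ^ (k * (k - 1) / 2) * qm i j ^ k) •
          shuffle qm
            (shuffle qm (starPow qm i ((1 - a i j).toNat - k)) (wgen K j))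
            (starPow qm i k)
      = 0 := by
  have ha := hoff i j hij
  obtain ⟨n, hn⟩ : ∃ n : ℕ, (1 - a i j).toNat = n + 1 := ⟨(-a i j).toNat, by omega⟩
  rw [hn]
  refine QuantumShuffle.serre_sum_eq_zero qm i j n ?_
  rw [hrel, ← zpow_natCast, ← zpow_add₀ (hq0 i i), show (n : ℤ) + a i j = 0 by omega, zpow_zero]

/-- for a symmetrizable GCM `(a_{ij})` and parameters with
`q_{ij}q_{ji} = q_{ii}^{a_{ij}}` and `q_{ii}` not a root of unity, the quantum
Serre relation holds in the quantum shuffle algebra: for `i ≠ j`,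
`∑_{k=0}^{1-a_{ij}} (-1)^k binom(1-a_{ij},k)_{q_{ii}} q_{ii}^{k(k-1)/2} q_{ij}^k
w_i^{⋆(1-a_{ij}-k)} ⋆ w_j ⋆ w_i^{⋆k} = 0`. -/
theorem shuffle_serre_relation (a : I → I → ℤ) (d : I → ℤ)
    (hd : ∀ i, 0 < d i) (hsym : ∀ i j, d i * a i j = d j * a j i)
    (hdiag : ∀ i, a i i = 2) (hoff : ∀ i j, i ≠ j → a i j ≤ 0)
    (qm : I → I → K) (hq0 : ∀ i j, qm i j ≠ 0)
    (hrel : ∀ i j, qm i j * qm j i = qm i i ^ (a i j))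
    (hru : ∀ i, ∀ n : ℕ, 0 < n → qm i i ^ n ≠ 1)
    (i j : I) (hij : i ≠ j) :
    ∑ k ∈ Finset.range ((1 - a i j).toNat + 1),
        ((-1 : K) ^ k * qbinom (qm i i) (1 - a i j).toNat k *
            qm i i ^ (k * (k - 1) / 2) * qm i j ^ k) •
          shuffle qm
            (shuffle qm (starPow qm i ((1 - a i j).toNat - k)) (wgen K j))
            (starPow qm i k)
      = 0 :=
  shuffle_serre_relation_general a hoff qm hq0 hrel i j hij
end
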